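/- arXiv:math/0702103 — 4 statements merged into one kernel-verified Lean document; each statement's English description precedes it below -/
import Mathlib

section
/- Let U be an almost periodic unitary on a Hilbert space H (i.e., H is generated by eigenvectors of U), let k ≥ 1, let α : {1,…,2k} → {1,…,k} be a pair partition, and let A₁,…,A_{2k−1} ∈ B(H) be arbitrary bounded operators. Then the entangled Cesàro means (1/N^k)·∑_{n₁,…,n_k=0}^{N−1} U^{n_{α(1)}} A₁ U^{n_{α(2)}} ⋯ U^{n_{α(2k−1)}} A_{2k−1} U^{n_{α(2k)}} converge in the strong operator topology as N → ∞. -/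
/-!
On an eigenvector `y` of `V` with eigenvalue `z`, the rightmost factor `V ^ n_j` of a word acts
as the scalar `z ^ n_j`, so the mean of a word of length `m + 1` at `y` is the mean of the word of
length `m` at `A_m y`, with `z ^ n_j` absorbed into a scalar weight. Allowing weights
`∏ j, μ j ^ n j` with `‖μ j‖ ≤ 1` from the start, induction on the length reduces everything to
products of scalar Cesàro means of `μ j ^ t`, which converge by the mean ergodic theorem in
dimension one. All means are bounded by `∏ i, ‖A i‖`, so convergence on the dense span of the
eigenvectors extends to every vector, and Banach–Steinhaus makes the limit a bounded operator.
-/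

open Filter Finset
open scoped Topology

theorem exists_tendsto_cesaro_pow {𝕜 : Type*} [RCLike 𝕜] {c : 𝕜} (hc : ‖c‖ ≤ 1) :
    ∃ l, Tendsto (fun N : ℕ => (N : 𝕜)⁻¹ * ∑ t ∈ range N, c ^ t) atTop (𝓝 l) := by
  let f : 𝕜 →L[𝕜] 𝕜 := c • ContinuousLinearMap.id 𝕜 𝕜
  have hf : ‖f‖ ≤ 1 := f.opNorm_le_bound zero_le_one fun x => by
    simpa [f, norm_smul] using mul_le_mul_of_nonneg_right hc (norm_nonneg x)
  refine ⟨_, (f.tendsto_birkhoffAverage_orthogonalProjection hf 1).congr fun N => ?_⟩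
  have hpow : ∀ t, f^[t] 1 = c ^ t := fun t => by
    induction t with
    | zero => simp
    | succ t ih => rw [Function.iterate_succ_apply', ih]; simp [f, pow_succ']
  simp [birkhoffAverage, birkhoffSum, hpow]

section CauchySubmodule

variable {𝕜 E F : Type*} [NontriviallyNormedField 𝕜] [SeminormedAddCommGroup E] [NormedSpace 𝕜 E]
  [SeminormedAddCommGroup F] [NormedSpace 𝕜 F]

def cauchySubmodule (T : ℕ → E →L[𝕜] F) : Submodule 𝕜 E where
  carrier := {x | CauchySeq fun n => T n x}
  add_mem' {x y} hx hy := by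
    simp only [Set.mem_ofPred_eq, map_add]
    exact hx.add hy
  zero_mem' := by simpa only [Set.mem_ofPred_eq, map_zero] using cauchySeq_const (0 : F)
  smul_mem' c x hx := by
    simp only [Set.mem_ofPred_eq, map_smul]
    exact (uniformContinuous_const_smul c).comp_cauchySeq hx

theorem isClosed_cauchySubmodule {T : ℕ → E →L[𝕜] F} {C : ℝ} (hC : ∀ n, ‖T n‖ ≤ C) :
    IsClosed (cauchySubmodule T : Set E) := by
  refine isClosed_of_closure_subset fun x hx => Metric.cauchySeq_iff.2 fun ε hε => ?_
  have hC0 : 0 ≤ C := (norm_nonneg _).trans (hC 0)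
  obtain ⟨y, hy, hxy⟩ := Metric.mem_closure_iff.1 hx (ε / (3 * (C + 1))) (by positivity)
  obtain ⟨M, hM⟩ := Metric.cauchySeq_iff.1 hy (ε / 3) (by positivity)
  have hnear : ∀ n, dist (T n x) (T n y) < ε / 3 := fun n => calc
    dist (T n x) (T n y) ≤ C * dist x y := by
      simpa only [dist_eq_norm, ← map_sub] using (T n).le_of_opNorm_le (hC n) (x - y)
    _ ≤ C * (ε / (3 * (C + 1))) := by gcongr
    _ < ε / 3 := by
      rw [mul_div_assoc', div_lt_div_iff₀ (by positivity) (by norm_num)]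
      nlinarith
  refine ⟨M, fun a ha b hb => ?_⟩
  calc dist (T a x) (T b x) ≤ dist (T a x) (T a y) + dist (T a y) (T b y) + dist (T b y) (T b x) :=
        dist_triangle4 _ _ _ _
    _ < ε / 3 + ε / 3 + ε / 3 := by
        gcongr
        · exact hnear a
        · exact hM a ha b hb
        · rw [dist_comm]; exact hnear b
    _ = ε := by ring

theorem exists_tendsto_apply_of_dense_span [CompleteSpace F] {T : ℕ → E →L[𝕜] F} {C : ℝ}
    (hC : ∀ n, ‖T n‖ ≤ C) {s : Set E} (hs : (Submodule.span 𝕜 s).topologicalClosure = ⊤)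
    (h : ∀ y ∈ s, ∃ L, Tendsto (fun n => T n y) atTop (𝓝 L)) (x : E) :
    ∃ L, Tendsto (fun n => T n x) atTop (𝓝 L) := by
  have hspan : Submodule.span 𝕜 s ≤ cauchySubmodule T :=
    Submodule.span_le.2 fun y hy => (h y hy).elim fun _ hL => hL.cauchySeq
  have hx : x ∈ cauchySubmodule T := by
    refine Submodule.topologicalClosure_minimal _ hspan (isClosed_cauchySubmodule hC) ?_
    simp [hs]
  exact cauchySeq_tendsto_of_complete hx

end CauchySubmodule

theorem norm_inv_card_smul_sum_le {𝕜 F ι : Type*} [RCLike 𝕜] [SeminormedAddCommGroup F]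
    [NormedSpace 𝕜 F] (s : Finset ι) (f : ι → F) {C : ℝ} (hC : 0 ≤ C)
    (hf : ∀ i ∈ s, ‖f i‖ ≤ C) : ‖((#s : 𝕜))⁻¹ • ∑ i ∈ s, f i‖ ≤ C :=
  calc ‖((#s : 𝕜))⁻¹ • ∑ i ∈ s, f i‖ ≤ (#s : ℝ)⁻¹ * (#s * C) := by
        rw [norm_smul, norm_inv, RCLike.norm_natCast]
        gcongr
        simpa using norm_sum_le_of_le s hf
    _ ≤ C := by rw [← mul_assoc]; exact mul_le_of_le_one_left hC inv_mul_le_one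

section Entangled

variable {𝕜 E : Type*} [RCLike 𝕜] [NormedAddCommGroup E] [NormedSpace 𝕜 E] {m k : ℕ}

theorem ContinuousLinearMap.norm_pow_le_one {V : E →L[𝕜] E} (hV : ‖V‖ ≤ 1) (t : ℕ) :
    ‖V ^ t‖ ≤ 1 := by
  rcases t.eq_zero_or_pos with rfl | ht
  · exact ContinuousLinearMap.norm_id_le
  · exact (norm_pow_le' V ht).trans (pow_le_one₀ (norm_nonneg V) hV)

theorem ContinuousLinearMap.pow_apply_of_apply_eq_smul {V : E →L[𝕜] E} {y : E} {z : 𝕜}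
    (hy : V y = z • y) (t : ℕ) : (V ^ t) y = z ^ t • y := by
  induction t with
  | zero => simp
  | succ t ih => rw [pow_succ', mul_apply_eq_comp, ih, map_smul, hy, smul_smul, pow_succ]

theorem ContinuousLinearMap.norm_le_one_of_apply_eq_smul {V : E →L[𝕜] E} (hV : ‖V‖ ≤ 1) {y : E}
    (hy0 : y ≠ 0) {z : 𝕜} (hy : V y = z • y) : ‖z‖ ≤ 1 := by
  have : ‖z‖ * ‖y‖ ≤ 1 * ‖y‖ := calc
    ‖z‖ * ‖y‖ = ‖V y‖ := by rw [hy, norm_smul]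
    _ ≤ 1 * ‖y‖ := V.le_of_opNorm_le hV y
  exact le_of_mul_le_mul_right this (norm_pos_iff.2 hy0)

noncomputable def entangledProduct (V : E →L[𝕜] E) (β : Fin m → Fin k) (A : Fin m → E →L[𝕜] E)
    (n : Fin k → ℕ) : E →L[𝕜] E :=
  (List.ofFn fun i => A i * V ^ n (β i)).prod

noncomputable def entangledMean (V : E →L[𝕜] E) (β : Fin m → Fin k) (A : Fin m → E →L[𝕜] E)
    (μ : Fin k → 𝕜) (N : ℕ) : E →L[𝕜] E :=
  ((N : 𝕜) ^ k)⁻¹ • ∑ n ∈ Fintype.piFinset fun _ => range N,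
    (∏ j, μ j ^ n j) • entangledProduct V β A n

variable (V : E →L[𝕜] E)

theorem entangledProduct_zero (β : Fin 0 → Fin k) (A : Fin 0 → E →L[𝕜] E) (n : Fin k → ℕ) :
    entangledProduct V β A n = 1 :=
  rfl

theorem entangledProduct_succ (β : Fin (m + 1) → Fin k) (A : Fin (m + 1) → E →L[𝕜] E)
    (n : Fin k → ℕ) :
    entangledProduct V β A n =
      entangledProduct V (β ∘ Fin.castSucc) (A ∘ Fin.castSucc) n *
        (A (Fin.last m) * V ^ n (β (Fin.last m))) := by
  rw [entangledProduct, List.ofFn_succ', List.concat_eq_append, List.prod_append,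
    List.prod_singleton]
  rfl

theorem entangledProduct_cons_one (β : Fin (m + 1) → Fin k) (A : Fin m → E →L[𝕜] E)
    (n : Fin k → ℕ) :
    entangledProduct V β (Fin.cons 1 A) n =
      V ^ n (β 0) * (List.ofFn fun i => A i * V ^ n (β i.succ)).prod := by
  simp [entangledProduct, List.ofFn_succ]

variable {V}

theorem norm_entangledProduct_le (hV : ‖V‖ ≤ 1) (β : Fin m → Fin k) (A : Fin m → E →L[𝕜] E)
    (n : Fin k → ℕ) : ‖entangledProduct V β A n‖ ≤ ∏ i, ‖A i‖ := by
  induction m with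
  | zero => exact ContinuousLinearMap.norm_id_le
  | succ m ih =>
    rw [entangledProduct_succ, Fin.prod_univ_castSucc]
    refine (norm_mul_le _ _).trans (mul_le_mul (ih _ _) ?_ (norm_nonneg _) ?_)
    · exact (norm_mul_le _ _).trans
        (mul_le_of_le_one_right (norm_nonneg _) (V.norm_pow_le_one hV _))
    · exact prod_nonneg fun i _ => norm_nonneg _

theorem norm_entangledMean_le (hV : ‖V‖ ≤ 1) (β : Fin m → Fin k) (A : Fin m → E →L[𝕜] E)
    {μ : Fin k → 𝕜} (hμ : ∀ j, ‖μ j‖ ≤ 1) (N : ℕ) :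
    ‖entangledMean V β A μ N‖ ≤ ∏ i, ‖A i‖ := by
  have hcard : (#(Fintype.piFinset fun _ : Fin k => range N) : 𝕜) = (N : 𝕜) ^ k := by
    simp
  rw [entangledMean, ← hcard]
  refine norm_inv_card_smul_sum_le _ _ (prod_nonneg fun i _ => norm_nonneg _) fun n _ => ?_
  rw [norm_smul]
  refine mul_le_of_le_one_left (norm_nonneg _) ?_ |>.trans (norm_entangledProduct_le hV β A n)
  rw [norm_prod]
  exact prod_le_one (fun j _ => norm_nonneg _) fun j _ => by
    simpa only [norm_pow] using pow_le_one₀ (norm_nonneg _) (hμ j)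

theorem entangledMean_zero (β : Fin 0 → Fin k) (A : Fin 0 → E →L[𝕜] E) (μ : Fin k → 𝕜)
    (N : ℕ) :
    entangledMean V β A μ N = (∏ j, ((N : 𝕜)⁻¹ * ∑ t ∈ range N, μ j ^ t)) • 1 := by
  simp only [entangledMean, entangledProduct_zero, ← sum_smul, ← prod_univ_sum, smul_smul,
    prod_mul_distrib, prod_const, card_univ, Fintype.card_fin, inv_pow]

theorem entangledMean_apply_of_apply_eq_smul {y : E} {z : 𝕜} (hy : V y = z • y)
    (β : Fin (m + 1) → Fin k) (A : Fin (m + 1) → E →L[𝕜] E) (μ : Fin k → 𝕜) (N : ℕ) :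
    entangledMean V β A μ N y =
      entangledMean V (β ∘ Fin.castSucc) (A ∘ Fin.castSucc)
        (Pi.mulSingle (β (Fin.last m)) z * μ) N (A (Fin.last m) y) := by
  simp only [entangledMean, smul_apply, _root_.sum_apply,
    entangledProduct_succ, mul_apply_eq_comp, V.pow_apply_of_apply_eq_smul hy,
    map_smul, smul_smul]
  congr 1
  refine sum_congr rfl fun n _ => ?_
  congr 1
  simp only [Pi.mul_apply, mul_pow, prod_mul_distrib, Pi.mulSingle_apply, ite_pow, one_pow,
    Fintype.prod_ite_eq']
  exact mul_comm _ _

theorem exists_tendsto_entangledMean_apply [CompleteSpace E] (hV : ‖V‖ ≤ 1)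
    (hV_eig : (Submodule.span 𝕜 {x : E | ∃ z : 𝕜, V x = z • x}).topologicalClosure = ⊤)
    (β : Fin m → Fin k) (A : Fin m → E →L[𝕜] E) {μ : Fin k → 𝕜} (hμ : ∀ j, ‖μ j‖ ≤ 1) (x : E) :
    ∃ L, Tendsto (fun N => entangledMean V β A μ N x) atTop (𝓝 L) := by
  induction m generalizing μ x with
  | zero =>
    choose l hl using fun j => exists_tendsto_cesaro_pow (hμ j)
    refine ⟨(∏ j, l j) • x, ?_⟩
    simpa [entangledMean_zero] using (tendsto_finsetProd univ fun j _ => hl j).smul_const x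
  | succ m ih =>
    refine exists_tendsto_apply_of_dense_span (norm_entangledMean_le hV β A hμ) hV_eig ?_ x
    rintro y ⟨z, hz⟩
    rcases eq_or_ne y 0 with rfl | hy0
    · exact ⟨0, by simp⟩
    have hz1 := V.norm_le_one_of_apply_eq_smul hV hy0 hz
    have hμ' : ∀ j, ‖(Pi.mulSingle (β (Fin.last m)) z * μ : Fin k → 𝕜) j‖ ≤ 1 := fun j => by
      rw [Pi.mul_apply, norm_mul]
      refine mul_le_one₀ ?_ (norm_nonneg _) (hμ j)
      rcases eq_or_ne j (β (Fin.last m)) with rfl | hj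
      · simpa using hz1
      · simp [hj]
    obtain ⟨L, hL⟩ := ih (β ∘ Fin.castSucc) (A ∘ Fin.castSucc) hμ' (A (Fin.last m) y)
    exact ⟨L, by simpa only [entangledMean_apply_of_apply_eq_smul hz] using hL⟩

theorem entangledMean_cons_one (β : Fin (m + 1) → Fin k) (A : Fin m → E →L[𝕜] E) (N : ℕ) :
    entangledMean V β (Fin.cons 1 A) 1 N = ((N : 𝕜) ^ k)⁻¹ • ∑ n ∈ Fintype.piFinset fun _ => range N,
      V ^ n (β 0) * (List.ofFn fun i => A i * V ^ n (β i.succ)).prod := by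
  simp [entangledMean, entangledProduct_cons_one]

end Entangled

/-- Entangled ergodic theorem in the almost periodic case: if the unitary `U` is almost periodic
(the eigenvectors of `U` generate `H`), `α` is a pair partition of `{1,…,2k}` and
`A₁, …, A_{2k-1}` are arbitrary bounded operators, then the entangled Cesàro means converge in
the strong operator topology. -/
theorem entangled_ergodic_theorem_almost_periodic
    {H : Type*} [NormedAddCommGroup H] [InnerProductSpace ℂ H] [CompleteSpace H]
    (U : unitary (H →L[ℂ] H))
    (hap : (Submodule.span ℂ {x : H | ∃ z : ℂ, (U : H →L[ℂ] H) x = z • x}).topologicalClosure = ⊤)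
    (k : ℕ) (hk : 1 ≤ k)
    (α : Fin (2 * k) → Fin k)
    (A : Fin (2 * k - 1) → (H →L[ℂ] H)) :
    ∃ S : H →L[ℂ] H, ∀ x : H,
      Tendsto
        (fun N : ℕ =>
          (((N : ℂ) ^ k)⁻¹ •
            ∑ n ∈ Fintype.piFinset (fun _ : Fin k => Finset.range N),
              ((U ^ (n (α ⟨0, by omega⟩)) : unitary (H →L[ℂ] H)) : H →L[ℂ] H) *
                (List.ofFn fun i : Fin (2 * k - 1) =>
                  A i *
                    ((U ^ (n (α (Fin.cast (by omega) i.succ))) : unitary (H →L[ℂ] H)) :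
                      H →L[ℂ] H)).prod) x)
        atTop (nhds (S x)) := by
  have hU : ‖(U : H →L[ℂ] H)‖ ≤ 1 := ContinuousLinearMap.opNorm_le_bound _ zero_le_one fun x => by
    rw [ContinuousLinearMap.norm_map_of_mem_unitary U.2, one_mul]
  have h2k : 2 * k - 1 + 1 = 2 * k := by omega
  choose S hS using exists_tendsto_entangledMean_apply hU hap (α ∘ Fin.cast h2k) (Fin.cons 1 A)
    (μ := 1) fun _ => norm_one.le
  refine ⟨continuousLinearMapOfTendsto _ (tendsto_pi_nhds.2 hS), fun x => ?_⟩
  have hSx := hS x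
  simp only [entangledMean_cons_one] at hSx
  exact hSx
end

section
/- Let U be a unitary on H, and for each eigenvalue z of U let E_z denote the orthogonal projection onto the corresponding eigenspace. For any bounded operator A on H, the net of finite partial sums ∑_{z ∈ F} E_z A E_z, indexed by finite subsets F of the point spectrum of U, converges in the strong operator topology. -/
/-!
Since `U` preserves inner products, its eigenspaces are mutually orthogonal, and `E z` is the
orthogonal projection onto the eigenspace for `z`. For any orthogonal family of closed subspaces
with projections `P i`, the vectors `P i (A (P i x))` are mutually orthogonal with
`‖P i (A (P i x))‖ ≤ ‖A‖ ‖P i x‖`, and Bessel's inequality `∑ ‖P i x‖² ≤ ‖x‖²` makes their squared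
norms summable; in a Hilbert space this is enough for the family itself to be summable.
-/

open Filter Finset
open scoped InnerProductSpace ComplexConjugate

open Module.End in
theorem orthogonalFamily_eigenspaces_of_inner_map_map {𝕜 E : Type*} [RCLike 𝕜]
    [NormedAddCommGroup E] [InnerProductSpace 𝕜 E] {T : E →ₗ[𝕜] E}
    (hT : ∀ x y, ⟪T x, T y⟫_𝕜 = ⟪x, y⟫_𝕜) :
    OrthogonalFamily 𝕜 (fun μ => eigenspace T μ) fun μ => (eigenspace T μ).subtypeₗᵢ := by
  rintro μ ν hμν ⟨v, hv⟩ ⟨w, hw⟩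
  change ⟪v, w⟫_𝕜 = 0
  rw [mem_eigenspace_iff] at hv hw
  have eigen_inner : ∀ {ν u}, T u = ν • u → ν * conj μ * ⟪v, u⟫_𝕜 = ⟪v, u⟫_𝕜 := fun {ν u} hu => by
    simpa only [hv, hu, inner_smul_left, inner_smul_right, ← mul_assoc] using hT v u
  by_contra hvw
  have hv0 : ⟪v, v⟫_𝕜 ≠ 0 := inner_self_ne_zero.mpr (by rintro rfl; simp at hvw)
  have hμμ := (mul_eq_right₀ hv0).mp (eigen_inner hv)
  have hμν' := (mul_eq_right₀ hvw).mp (eigen_inner hw)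
  exact hμν (mul_right_cancel₀ (right_ne_zero_of_mul_eq_one hμμ) (hμμ.trans hμν'.symm))

theorem OrthogonalFamily.sum_norm_sq_starProjection_le {𝕜 E ι : Type*} [RCLike 𝕜]
    [NormedAddCommGroup E] [InnerProductSpace 𝕜 E] {K : ι → Submodule 𝕜 E}
    [∀ i, (K i).HasOrthogonalProjection]
    (hK : OrthogonalFamily 𝕜 (fun i => K i) fun i => (K i).subtypeₗᵢ) (s : Finset ι) (x : E) :
    ∑ i ∈ s, ‖(K i).starProjection x‖ ^ 2 ≤ ‖x‖ ^ 2 := by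
  set y := ∑ i ∈ s, (K i).starProjection x
  have hy : ‖y‖ ^ 2 = ∑ i ∈ s, ‖(K i).starProjection x‖ ^ 2 :=
    hK.norm_sum (fun i => (K i).orthogonalProjectionOnto x) s
  have hyx : RCLike.re ⟪y, x⟫_𝕜 = ‖y‖ ^ 2 := by
    simp only [y, sum_inner, map_sum, Submodule.re_inner_starProjection_eq_normSq, hy]
    rfl
  have hle : ‖y‖ ^ 2 ≤ ‖y‖ * ‖x‖ := hyx ▸ re_inner_le_norm y x
  rw [← hy]
  nlinarith [norm_nonneg y, norm_nonneg x]

theorem OrthogonalFamily.summable_starProjection_comp_starProjection {𝕜 E ι : Type*} [RCLike 𝕜]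
    [NormedAddCommGroup E] [InnerProductSpace 𝕜 E] [CompleteSpace E] {K : ι → Submodule 𝕜 E}
    [∀ i, (K i).HasOrthogonalProjection]
    (hK : OrthogonalFamily 𝕜 (fun i => K i) fun i => (K i).subtypeₗᵢ) (A : E →L[𝕜] E) (x : E) :
    Summable fun i => (K i).starProjection (A ((K i).starProjection x)) := by
  refine (hK.summable_iff_norm_sq_summable
    fun i => (K i).orthogonalProjectionOnto (A ((K i).starProjection x))).mpr ?_
  have hbessel : Summable fun i => ‖(K i).starProjection x‖ ^ 2 :=
    summable_of_sum_le (fun _ => sq_nonneg _) (hK.sum_norm_sq_starProjection_le · x)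
  refine .of_nonneg_of_le (fun _ => sq_nonneg _) (fun i => ?_) (hbessel.mul_left (‖A‖ ^ 2))
  rw [← mul_pow]
  gcongr
  exact ((K i).norm_orthogonalProjectionOnto_apply_le _).trans (A.le_opNorm _)

/-- For a unitary `U` with eigenprojections `E_z` (the orthogonal projection onto
`ker (U - z·I)`) and any bounded operator `A`, the net of finite partial sums
`∑_{z ∈ F} E_z A E_z`, over finite subsets `F` of the point spectrum of `U`, converges in the
strong operator topology. -/
theorem partial_sums_eigenprojection_compress_converge
    {H : Type*} [NormedAddCommGroup H] [InnerProductSpace ℂ H] [CompleteSpace H]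
    (U : unitary (H →L[ℂ] H)) (E : ℂ → (H →L[ℂ] H))
    (hE : ∀ z : ℂ, ∀ x : H,
      E z x ∈ LinearMap.ker (((U : H →L[ℂ] H) - z • (1 : H →L[ℂ] H) : H →L[ℂ] H) : H →ₗ[ℂ] H) ∧
      x - E z x ∈ (LinearMap.ker (((U : H →L[ℂ] H) - z • (1 : H →L[ℂ] H) : H →L[ℂ] H) : H →ₗ[ℂ] H))ᗮ)
    (A : H →L[ℂ] H) :
    ∀ x : H, ∃ L : H,
      Tendsto
        (fun F : Finset {z : ℂ // ∃ v : H, v ≠ 0 ∧ (U : H →L[ℂ] H) v = z • v} =>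
          ∑ z ∈ F, E (z : ℂ) (A (E (z : ℂ) x)))
        atTop (nhds L) := by
  intro x
  set K : ℂ → Submodule ℂ H := fun z =>
    LinearMap.ker (((U : H →L[ℂ] H) - z • (1 : H →L[ℂ] H) : H →L[ℂ] H) : H →ₗ[ℂ] H)
  have hK : OrthogonalFamily ℂ (fun z => K z) fun z => (K z).subtypeₗᵢ := by
    have hK_eq : K = Module.End.eigenspace ((U : H →L[ℂ] H) : H →ₗ[ℂ] H) :=
      funext fun _ => Module.End.eigenspace_def.symm
    exact hK_eq ▸ orthogonalFamily_eigenspaces_of_inner_map_map (Unitary.inner_map_map U)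
  have hE_eq : ∀ z y, E z y = (K z).starProjection y := fun z y =>
    ((K z).eq_starProjection_of_mem_orthogonal (hE z y).1 (hE z y).2).symm
  simp only [hE_eq]
  exact ⟨_, ((hK.comp Subtype.val_injective).summable_starProjection_comp_starProjection A x).hasSum⟩
end

section
/- Let U be a unitary on H and ℰ(A) = ∑_{z ∈ σ_pp(U)} E_z A E_z. If A is a compact operator on H, then ℰ(A) is compact. -/
open Filter Finset
open scoped InnerProductSpace Topology

/-!
The `E z` are the orthogonal projections onto the eigenspaces of `U`, which are mutually
orthogonal. For an orthogonal family of projections `P i`, Bessel's inequality gives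
`P i x → 0` along the cofinite filter for every `x`; as a compact `A` maps the unit ball into a
totally bounded set, this convergence is uniform there, i.e. `‖P i ∘ A‖ → 0`. By Pythagoras the
block-diagonal operator `∑ i ∈ s, P i A P i` has norm at most `max i ∈ s, ‖P i A‖`, so the series
`∑ P i A P i` is Cauchy in operator norm. Its sum is `ℰ(A)`, a norm limit of finite sums of
compact operators.
-/

theorem ContinuousLinearMap.tendsto_comp_zero_of_isCompactOperator
    {𝕜 E F G : Type*} [NontriviallyNormedField 𝕜] [NormedAlgebra ℝ 𝕜]
    [NormedAddCommGroup E] [NormedSpace 𝕜 E] [NormedAddCommGroup F] [NormedSpace 𝕜 F]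
    [NormedAddCommGroup G] [NormedSpace 𝕜 G] {ι : Type*} {l : Filter ι}
    {P : ι → F →L[𝕜] G} {C : ℝ} (hP : ∀ i, ‖P i‖ ≤ C)
    (hPy : ∀ y, Tendsto (fun i => P i y) l (𝓝 0)) {A : E →L[𝕜] F} (hA : IsCompactOperator A) :
    Tendsto (fun i => P i ∘L A) l (𝓝 0) := by
  refine Metric.tendsto_nhds.2 fun ε hε => ?_
  set δ := ε / (2 * (|C| + 1))
  have hδ : 0 < δ := by positivity
  have hCδ : (|C| + 1) * δ = ε / 2 := by
    simp only [δ]; field_simp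
  obtain ⟨S, hS, hAS⟩ := hA.image_closedBall_subset_compact 1
  obtain ⟨t, ht, hSt⟩ := Metric.totallyBounded_iff.1 hS.totallyBounded δ hδ
  have hsmall : ∀ᶠ i in l, ∀ y ∈ t, ‖P i y‖ < δ :=
    (eventually_all_finite ht).2 fun y _ => by
      simpa only [dist_zero_right] using Metric.tendsto_nhds.1 (hPy y) δ hδ
  filter_upwards [hsmall] with i hi
  rw [dist_zero_right]
  refine lt_of_le_of_lt (ContinuousLinearMap.opNorm_le_of_unit_norm (by positivity)
    fun x hx => ?_) (hCδ ▸ half_lt_self hε)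
  obtain ⟨y, hy, hxy⟩ := Set.mem_iUnion₂.1 (hSt (hAS ⟨x, by simp [hx], rfl⟩))
  rw [Metric.mem_ball, dist_eq_norm] at hxy
  have hC : 0 ≤ C := (norm_nonneg _).trans (hP i)
  calc ‖(P i ∘L A) x‖ = ‖P i (A x - y) + P i y‖ := by simp
    _ ≤ ‖P i (A x - y)‖ + ‖P i y‖ := norm_add_le _ _
    _ ≤ C * δ + δ := by
        gcongr
        · exact (P i).le_of_opNorm_le (hP i) _ |>.trans (by gcongr; exact hxy.le)
        · exact (hi y hy).le
    _ = (|C| + 1) * δ := by rw [abs_of_nonneg hC]; ring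

section OrthogonalFamily

variable {𝕜 E ι : Type*} [RCLike 𝕜] [NormedAddCommGroup E] [InnerProductSpace 𝕜 E]
  {K : ι → Submodule 𝕜 E} [∀ i, (K i).HasOrthogonalProjection]
  (hK : OrthogonalFamily 𝕜 (fun i => K i) fun i => (K i).subtypeₗᵢ)
include hK

theorem OrthogonalFamily.norm_sum_starProjection_sq (y : ι → E) (s : Finset ι) :
    ‖∑ i ∈ s, (K i).starProjection (y i)‖ ^ 2 = ∑ i ∈ s, ‖(K i).starProjection (y i)‖ ^ 2 :=
  hK.norm_sum (fun i => (K i).orthogonalProjectionOnto (y i)) s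

theorem OrthogonalFamily.sum_norm_starProjection_sq_le (x : E) (s : Finset ι) :
    ∑ i ∈ s, ‖(K i).starProjection x‖ ^ 2 ≤ ‖x‖ ^ 2 := by
  set S := ∑ i ∈ s, ‖(K i).starProjection x‖ ^ 2
  have hpyth : ‖∑ i ∈ s, (K i).starProjection x‖ ^ 2 = S :=
    hK.norm_sum_starProjection_sq (fun _ => x) s
  have hre : RCLike.re ⟪∑ i ∈ s, (K i).starProjection x, x⟫_𝕜 = S := by
    simp only [sum_inner, map_sum, Submodule.re_inner_starProjection_eq_normSq]
    rfl
  have hS : S ≤ ‖∑ i ∈ s, (K i).starProjection x‖ * ‖x‖ := hre ▸ re_inner_le_norm _ _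
  nlinarith [mul_self_le_mul_self (by positivity : 0 ≤ S) hS]

theorem OrthogonalFamily.tendsto_starProjection_cofinite (x : E) :
    Tendsto (fun i => (K i).starProjection x) cofinite (𝓝 0) := by
  have hsum : Summable fun i => ‖(K i).starProjection x‖ ^ 2 :=
    summable_of_sum_le (fun _ => sq_nonneg _) (hK.sum_norm_starProjection_sq_le x)
  refine tendsto_zero_iff_norm_tendsto_zero.2 ?_
  simpa using (hsum.tendsto_cofinite_zero).sqrt

theorem OrthogonalFamily.norm_sum_starProjection_comp_comp_le (B : E →L[𝕜] E) {s : Finset ι}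
    {c : ℝ} (hc : 0 ≤ c) (hB : ∀ i ∈ s, ‖(K i).starProjection ∘L B‖ ≤ c) :
    ‖∑ i ∈ s, (K i).starProjection ∘L B ∘L (K i).starProjection‖ ≤ c := by
  refine ContinuousLinearMap.opNorm_le_bound _ hc fun x => ?_
  have hterm : ∀ i ∈ s, ‖(K i).starProjection (B ((K i).starProjection x))‖ ^ 2
      ≤ c ^ 2 * ‖(K i).starProjection x‖ ^ 2 := fun i hi => by
    rw [← mul_pow]
    gcongr
    exact ((K i).starProjection ∘L B).le_of_opNorm_le (hB i hi) _
  rw [← pow_le_pow_iff_left₀ (norm_nonneg _) (by positivity) two_ne_zero]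
  calc ‖(∑ i ∈ s, (K i).starProjection ∘L B ∘L (K i).starProjection) x‖ ^ 2
      = ∑ i ∈ s, ‖(K i).starProjection (B ((K i).starProjection x))‖ ^ 2 := by
        simpa using hK.norm_sum_starProjection_sq (fun i => B ((K i).starProjection x)) s
    _ ≤ ∑ i ∈ s, c ^ 2 * ‖(K i).starProjection x‖ ^ 2 := sum_le_sum hterm
    _ ≤ c ^ 2 * ‖x‖ ^ 2 := by
        rw [← mul_sum]; gcongr; exact hK.sum_norm_starProjection_sq_le x s
    _ = (c * ‖x‖) ^ 2 := by ring

theorem OrthogonalFamily.summable_starProjection_comp_comp [CompleteSpace E] {A : E →L[𝕜] E}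
    (hA : IsCompactOperator A) :
    Summable fun i => (K i).starProjection ∘L A ∘L (K i).starProjection := by
  refine summable_iff_vanishing_norm.2 fun ε hε => ?_
  have hsmall : ∀ᶠ i in cofinite, ‖(K i).starProjection ∘L A‖ ≤ ε / 2 :=
    (ContinuousLinearMap.tendsto_comp_zero_of_isCompactOperator
      (fun i => Submodule.starProjection_norm_le (K i)) hK.tendsto_starProjection_cofinite
      hA).norm.eventually (ge_mem_nhds (by simpa using half_pos hε))
  refine ⟨(Filter.eventually_cofinite.1 hsmall).toFinset, fun t ht => ?_⟩
  refine (hK.norm_sum_starProjection_comp_comp_le A (half_pos hε).le fun i hi => ?_).trans_lt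
    (half_lt_self hε)
  by_contra h
  exact Finset.disjoint_left.1 ht hi (by simpa using h)

theorem OrthogonalFamily.isCompactOperator_of_hasSum_starProjection_comp_comp [CompleteSpace E]
    {A T : E →L[𝕜] E} (hA : IsCompactOperator A)
    (hT : ∀ x, HasSum (fun i => (K i).starProjection (A ((K i).starProjection x))) (T x)) :
    IsCompactOperator T := by
  obtain ⟨S, hS⟩ := hK.summable_starProjection_comp_comp hA
  have hST : S = T := ContinuousLinearMap.ext fun x =>
    ((ContinuousLinearMap.apply 𝕜 E x).hasSum hS).unique (hT x)
  refine hST ▸ isCompactOperator_of_tendsto hS (Eventually.of_forall fun s => ?_)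
  exact Finset.sum_induction _ (fun B : E →L[𝕜] E => IsCompactOperator B)
    (fun _ _ => IsCompactOperator.add) isCompactOperator_zero
    fun i _ => (hA.comp_clm (K i).starProjection).clm_comp (K i).starProjection

end OrthogonalFamily

theorem Unitary.orthogonalFamily_ker_sub_smul_one {𝕜 H : Type*} [RCLike 𝕜]
    [NormedAddCommGroup H] [InnerProductSpace 𝕜 H] [CompleteSpace H] (U : unitary (H →L[𝕜] H)) :
    OrthogonalFamily 𝕜 (fun z : 𝕜 => LinearMap.ker ((U - z • 1 : H →L[𝕜] H) : H →ₗ[𝕜] H))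
      fun z => (LinearMap.ker ((U - z • 1 : H →L[𝕜] H) : H →ₗ[𝕜] H)).subtypeₗᵢ := by
  rintro z w hzw ⟨u, hu⟩ ⟨v, hv⟩
  change ⟪u, v⟫_𝕜 = 0
  replace hu : (U : H →L[𝕜] H) u = z • u := by simpa [sub_eq_zero] using hu
  replace hv : (U : H →L[𝕜] H) v = w • v := by simpa [sub_eq_zero] using hv
  by_cases hu0 : u = 0
  · simp [hu0]
  -- `|z| = 1`, while `⟪u, v⟫ ≠ 0` would force `conj z * w = 1` as well.
  have hz : (starRingEnd 𝕜) z * z = 1 := by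
    have := Unitary.norm_map U u
    rw [hu, norm_smul] at this
    have : ‖z‖ = 1 := by simpa [norm_ne_zero_iff.2 hu0] using this
    rw [RCLike.conj_mul, this]; simp
  have hinner := Unitary.inner_map_map U u v
  rw [hu, hv, inner_smul_left, inner_smul_right, ← mul_assoc] at hinner
  by_contra h
  have hzw' : (starRingEnd 𝕜) z * w = (starRingEnd 𝕜) z * z :=
    hz ▸ mul_right_cancel₀ h (hinner.trans (one_mul _).symm)
  exact hzw (mul_left_cancel₀ (left_ne_zero_of_mul_eq_one hz) hzw').symm

/-- If `A` is a compact operator, then `ℰ(A) = ∑_{z ∈ σ_pp(U)} E_z A E_z` (the strong-operator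
limit of the finite partial sums) is a compact operator. -/
theorem eigen_compression_compact
    {H : Type*} [NormedAddCommGroup H] [InnerProductSpace ℂ H] [CompleteSpace H]
    (U : unitary (H →L[ℂ] H)) (E : ℂ → (H →L[ℂ] H))
    (hE : ∀ z : ℂ, ∀ x : H,
      E z x ∈ LinearMap.ker (((U : H →L[ℂ] H) - z • (1 : H →L[ℂ] H) : H →L[ℂ] H) : H →ₗ[ℂ] H) ∧
      x - E z x ∈ (LinearMap.ker (((U : H →L[ℂ] H) - z • (1 : H →L[ℂ] H) : H →L[ℂ] H) : H →ₗ[ℂ] H))ᗮ)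
    (A : H →L[ℂ] H) (hA : IsCompactOperator A)
    (EA : H →L[ℂ] H)
    (hEA : ∀ x : H,
      Tendsto
        (fun F : Finset {z : ℂ // ∃ v : H, v ≠ 0 ∧ (U : H →L[ℂ] H) v = z • v} =>
          ∑ z ∈ F, E (z : ℂ) (A (E (z : ℂ) x)))
        atTop (nhds (EA x))) :
    IsCompactOperator EA := by
  have hE_eq : ∀ z x, E z x = (LinearMap.ker
      (((U : H →L[ℂ] H) - z • (1 : H →L[ℂ] H) : H →L[ℂ] H) : H →ₗ[ℂ] H)).starProjection x :=
    fun z x => (Submodule.eq_starProjection_of_mem_orthogonal (hE z x).1 (hE z x).2).symm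
  have hK := (Unitary.orthogonalFamily_ker_sub_smul_one U).comp
    (Subtype.val_injective (p := fun z : ℂ => ∃ v : H, v ≠ 0 ∧ (U : H →L[ℂ] H) v = z • v))
  simp only [hE_eq] at hEA
  exact hK.isCompactOperator_of_hasSum_starProjection_comp_comp hA hEA
end

section
/- If A = ⟨·, x⟩x is a rank-one positive operator on H and {E_z : z ∈ σ_pp(U)} the eigenprojections of a unitary U, then ℰ(A) = ∑_{z ∈ σ_pp(U)} ⟨·, E_z x⟩ E_z x; moreover only countably many terms are nonzero, and the partial sums converge in operator norm, so ℰ(A) is compact. -/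
/-!
`E z` is the orthogonal projection onto `ker (U - z)`, so `E z (A (E z y)) = ⟪E z x, y⟫ • E z x`.
Eigenvectors of a unitary for distinct eigenvalues are orthogonal, hence Bessel's inequality
gives `∑ ‖E z x‖² ≤ ‖x‖²`. Since `‖⟪v, ·⟫ v‖ = ‖v‖²`, the rank-one series is absolutely summable
in operator norm; its sum agrees pointwise with `EA`, and a norm limit of finite-rank operators
is compact.
-/

open Filter Finset
open scoped InnerProductSpace

open InnerProductSpace in
theorem isCompactOperator_rankOne {𝕜 E F : Type*} [RCLike 𝕜] [NormedAddCommGroup E]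
    [InnerProductSpace 𝕜 E] [NormedAddCommGroup F] [InnerProductSpace 𝕜 F] (x : E) (y : F) :
    IsCompactOperator (rankOne 𝕜 x y) :=
  (isCompactOperator_of_locallyCompactSpace_rng (.toSpanSingleton 𝕜 x)).comp_clm (innerSL 𝕜 y)

theorem isCompactOperator_of_hasSum {ι 𝕜 E F : Type*} [NontriviallyNormedField 𝕜]
    [NormedAddCommGroup E] [NormedSpace 𝕜 E] [NormedAddCommGroup F] [NormedSpace 𝕜 F]
    [CompleteSpace F] {f : ι → E →L[𝕜] F} {T : E →L[𝕜] F} (hT : HasSum f T)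
    (hf : ∀ i, IsCompactOperator (f i)) : IsCompactOperator T :=
  isCompactOperator_of_tendsto hT <| .of_forall fun _ =>
    (compactOperator (RingHom.id 𝕜) E F).sum_mem fun i _ => hf i

theorem ContinuousLinearMap.hasSum_of_summable_of_hasSum_apply {ι 𝕜 E F : Type*}
    [NontriviallyNormedField 𝕜] [NormedAddCommGroup E] [NormedSpace 𝕜 E] [NormedAddCommGroup F]
    [NormedSpace 𝕜 F] {f : ι → E →L[𝕜] F} {T : E →L[𝕜] F} (hf : Summable f)
    (hT : ∀ y, HasSum (fun i => f i y) (T y)) : HasSum f T := by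
  obtain ⟨S, hS⟩ := hf
  convert hS
  ext y
  exact (hT y).unique ((apply 𝕜 F y).hasSum hS)

theorem mem_ker_sub_smul_one_iff {𝕜 E : Type*} [NormedField 𝕜] [NormedAddCommGroup E]
    [NormedSpace 𝕜 E] (T : E →L[𝕜] E) (z : 𝕜) (v : E) :
    v ∈ LinearMap.ker ((T - z • 1 : E →L[𝕜] E) : E →ₗ[𝕜] E) ↔ T v = z • v := by
  simp [sub_eq_zero]

section InnerProductSpace

variable {𝕜 E : Type*} [RCLike 𝕜] [NormedAddCommGroup E] [InnerProductSpace 𝕜 E]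

theorem inner_eq_inner_of_forall_sub_mem_orthogonal {K : Submodule 𝕜 E} {P : E → E}
    (hP : ∀ a, P a ∈ K ∧ a - P a ∈ Kᗮ) (a b : E) : ⟪a, P b⟫_𝕜 = ⟪P a, b⟫_𝕜 := by
  have ha : ⟪a - P a, P b⟫_𝕜 = 0 := Submodule.inner_left_of_mem_orthogonal (hP b).1 (hP a).2
  have hb : ⟪P a, b - P b⟫_𝕜 = 0 := Submodule.inner_right_of_mem_orthogonal (hP a).1 (hP b).2
  rw [inner_sub_left, sub_eq_zero] at ha
  rw [inner_sub_right, sub_eq_zero] at hb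
  rw [ha, hb]

theorem inner_eq_zero_of_eq_smul_of_inner_map_map {u : E → E}
    (hu : ∀ v w, ⟪u v, u w⟫_𝕜 = ⟪v, w⟫_𝕜) {a b : 𝕜} {v w : E} (hv : u v = a • v)
    (hw : u w = b • w) (hab : a ≠ b) : ⟪v, w⟫_𝕜 = 0 := by
  have hscale : ∀ {c : 𝕜} {w : E}, u w = c • w → (starRingEnd 𝕜 a * c - 1) * ⟪v, w⟫_𝕜 = 0 := by
    intro c w hw
    have := hu v w
    rw [hv, hw, inner_smul_left, inner_smul_right] at this
    linear_combination this
  by_contra hvw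
  have hvv : ⟪v, v⟫_𝕜 ≠ 0 := by
    rintro h
    rw [inner_self_eq_zero.mp h, inner_zero_left] at hvw
    exact hvw rfl
  have ha : starRingEnd 𝕜 a * a = 1 := sub_eq_zero.mp ((mul_eq_zero.mp (hscale hv)).resolve_right hvv)
  have hb : starRingEnd 𝕜 a * b = 1 := sub_eq_zero.mp ((mul_eq_zero.mp (hscale hw)).resolve_right hvw)
  exact hab (mul_left_cancel₀ (left_ne_zero_of_mul_eq_one ha) (ha.trans hb.symm))

theorem sum_norm_sq_le_norm_sq {ι : Type*} {v : ι → E} {x : E}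
    (hv : Pairwise fun i j => ⟪v i, v j⟫_𝕜 = 0) (hx : ∀ i, ⟪v i, x - v i⟫_𝕜 = 0) (s : Finset ι) :
    ∑ i ∈ s, ‖v i‖ ^ 2 ≤ ‖x‖ ^ 2 := by
  set S := ∑ i ∈ s, v i
  have hvx : ∀ i, ⟪v i, x⟫_𝕜 = ⟪v i, v i⟫_𝕜 := fun i => by
    rw [← sub_eq_zero, ← inner_sub_right, hx]
  have hvS : ∀ i ∈ s, ⟪v i, S⟫_𝕜 = ⟪v i, v i⟫_𝕜 := fun i hi => by
    rw [inner_sum, Finset.sum_eq_single i (fun j _ hji => hv hji.symm) (absurd hi)]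
  have hSx : ⟪S, x - S⟫_𝕜 = 0 :=
    (sum_inner _ _ _).trans <| Finset.sum_eq_zero fun i hi => by
      rw [inner_sub_right, hvS i hi, hvx, sub_self]
  have hS : ‖S‖ ^ 2 = ∑ i ∈ s, ‖v i‖ ^ 2 := by
    rw [← inner_self_eq_norm_sq (𝕜 := 𝕜), sum_inner, map_sum]
    exact Finset.sum_congr rfl fun i hi => by rw [hvS i hi, inner_self_eq_norm_sq]
  calc ∑ i ∈ s, ‖v i‖ ^ 2 = ‖S‖ ^ 2 := hS.symm
    _ ≤ ‖S‖ ^ 2 + ‖x - S‖ ^ 2 := le_add_of_nonneg_right (sq_nonneg _)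
    _ = ‖x‖ ^ 2 := by
      simpa only [sq, add_sub_cancel] using
        (norm_add_sq_eq_norm_sq_add_norm_sq_of_inner_eq_zero _ _ hSx).symm

end InnerProductSpace

/-- For the rank-one positive operator `A = ⟨·, x⟩x` one has
`ℰ(A) = ∑_{z ∈ σ_pp(U)} ⟨·, E_z x⟩ E_z x`; only countably many terms are nonzero, the partial
sums converge in operator norm, and `ℰ(A)` is compact. -/
theorem eigen_compression_rank_one
    {H : Type*} [NormedAddCommGroup H] [InnerProductSpace ℂ H] [CompleteSpace H]
    (U : unitary (H →L[ℂ] H)) (E : ℂ → (H →L[ℂ] H))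
    (hE : ∀ z : ℂ, ∀ x : H,
      E z x ∈ LinearMap.ker (((U : H →L[ℂ] H) - z • (1 : H →L[ℂ] H) : H →L[ℂ] H) : H →ₗ[ℂ] H) ∧
      x - E z x ∈ (LinearMap.ker (((U : H →L[ℂ] H) - z • (1 : H →L[ℂ] H) : H →L[ℂ] H) : H →ₗ[ℂ] H))ᗮ)
    (x : H) (A : H →L[ℂ] H) (hA : ∀ y : H, A y = ⟪x, y⟫_ℂ • x)
    (EA : H →L[ℂ] H)
    (hEA : ∀ y : H,
      Tendsto
        (fun F : Finset {z : ℂ // ∃ v : H, v ≠ 0 ∧ (U : H →L[ℂ] H) v = z • v} =>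
          ∑ z ∈ F, E (z : ℂ) (A (E (z : ℂ) y)))
        atTop (nhds (EA y))) :
    (∀ y : H,
      Tendsto
        (fun F : Finset {z : ℂ // ∃ v : H, v ≠ 0 ∧ (U : H →L[ℂ] H) v = z • v} =>
          ∑ z ∈ F, ⟪E (z : ℂ) x, y⟫_ℂ • E (z : ℂ) x)
        atTop (nhds (EA y))) ∧
    {z : ℂ | (∃ v : H, v ≠ 0 ∧ (U : H →L[ℂ] H) v = z • v) ∧ E z x ≠ 0}.Countable ∧
    Tendsto
      (fun F : Finset {z : ℂ // ∃ v : H, v ≠ 0 ∧ (U : H →L[ℂ] H) v = z • v} =>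
        ∑ z ∈ F, (innerSL ℂ (E (z : ℂ) x)).smulRight (E (z : ℂ) x))
      atTop (nhds EA) ∧
    IsCompactOperator EA := by
  set ι := {z : ℂ // ∃ v : H, v ≠ 0 ∧ (U : H →L[ℂ] H) v = z • v}
  have heig : ∀ z a, (U : H →L[ℂ] H) (E z a) = z • E z a := fun z a =>
    (mem_ker_sub_smul_one_iff _ z _).mp (hE z a).1
  have hsummand : ∀ z y, E z (A (E z y)) = ⟪E z x, y⟫_ℂ • E z x := fun z y => by
    rw [hA, map_smul, inner_eq_inner_of_forall_sub_mem_orthogonal (hE z)]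
  have hpointwise : ∀ y, HasSum (fun z : ι => ⟪E z x, y⟫_ℂ • E z x) (EA y) := fun y => by
    have := hEA y
    simp only [hsummand] at this
    exact this
  have hbessel : ∀ F : Finset ι, ∑ z ∈ F, ‖E z x‖ ^ 2 ≤ ‖x‖ ^ 2 :=
    sum_norm_sq_le_norm_sq
      (fun z w hzw => inner_eq_zero_of_eq_smul_of_inner_map_map
        (ContinuousLinearMap.inner_map_map_of_mem_unitary U.prop) (heig z x) (heig w x)
        (Subtype.coe_ne_coe.mpr hzw))
      (fun z => Submodule.inner_right_of_mem_orthogonal (hE z x).1 (hE z x).2)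
  have hsq : Summable fun z : ι => ‖E z x‖ ^ 2 := summable_of_sum_le (fun _ => sq_nonneg _) hbessel
  -- `rankOne ℂ v v` unfolds to `(innerSL ℂ v).smulRight v`, so this is the third conjunct.
  have hrank : HasSum (fun z : ι => InnerProductSpace.rankOne ℂ (E z x) (E z x)) EA :=
    ContinuousLinearMap.hasSum_of_summable_of_hasSum_apply
      (.of_norm (by simpa only [InnerProductSpace.norm_rankOne, sq] using hsq)) hpointwise
  refine ⟨hpointwise, ?_, hrank,
    isCompactOperator_of_hasSum hrank fun _ => isCompactOperator_rankOne _ _⟩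
  refine (hsq.countable_support.image Subtype.val).mono ?_
  rintro z ⟨hz, hEz⟩
  exact ⟨⟨z, hz⟩, by simpa using hEz, rfl⟩
end
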